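/- arXiv:1301.4877 — 2 statements merged into one kernel-verified Lean document; each statement's English description precedes it below -/
import Mathlib

section
/- For all integers 0 ≤ k ≤ n with n ≥ 1, the rational number (6k)!·(6n-6k)!·(2n)!·(2n-2)! / ((3k)!·(3n-3k)!·(3n)!·(2k)!·(2n-2k)!·(2n-1)!) is an integer. -/
open Finset Nat

lemma sc0 (q k m : ℕ) : 3*k/q + 3*m/q + (3*k+3*m)/q ≤ 6*k/q + 6*m/q := by
  rcases Nat.eq_zero_or_pos q with rfl | hq
  · simp
  have hu : 3*k % q < q := Nat.mod_lt _ hq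
  have hv : 3*m % q < q := Nat.mod_lt _ hq
  rw [show 6*k = 3*k+3*k by ring, show 6*m = 3*m+3*m by ring,
    Nat.add_div hq, Nat.add_div hq, Nat.add_div hq]
  split_ifs <;> omega

lemma sc1 (q k m : ℕ) (h5 : 5 ≤ q) (hk : q ∣ 3*k) (hm : 2 * (3*m % q) = q + 3) :
    3*k/q + 3*m/q + (3*k+3*m)/q + 1 ≤ 6*k/q + 6*m/q := by
  have hq : 0 < q := by omega
  have hu : 3*k % q = 0 := Nat.mod_eq_zero_of_dvd hk
  have hv : 3*m % q < q := Nat.mod_lt _ hq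
  rw [show 6*k = 3*k+3*k by ring, show 6*m = 3*m+3*m by ring,
    Nat.add_div hq, Nat.add_div hq, Nat.add_div hq]
  split_ifs <;> omega

lemma sum_bound {B c j : ℕ} (f g : ℕ → ℕ) (h0 : ∀ i ∈ Finset.Ico 1 B, f i ≤ g i)
    (h1 : ∀ i ∈ Finset.Ico c (c+j), f i + 1 ≤ g i)
    (hsub : Finset.Ico c (c+j) ⊆ Finset.Ico 1 B) :
    (∑ i ∈ Finset.Ico 1 B, f i) + j ≤ ∑ i ∈ Finset.Ico 1 B, g i := by
  have key : ∑ i ∈ Finset.Ico 1 B, (f i + if i ∈ Finset.Ico c (c+j) then 1 else 0)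
      ≤ ∑ i ∈ Finset.Ico 1 B, g i := by
    apply Finset.sum_le_sum
    intro i hi
    split_ifs with h
    · exact h1 i h
    · simpa using h0 i hi
  rw [Finset.sum_add_distrib] at key
  have hcard : ∑ i ∈ Finset.Ico 1 B, (if i ∈ Finset.Ico c (c+j) then 1 else 0) = j := by
    rw [Finset.sum_ite_mem, Finset.inter_eq_right.mpr hsub, Finset.sum_const, smul_eq_mul,
      mul_one, Nat.card_Ico]
    omega
  omega

lemma legendre {p : ℕ} (hp : p.Prime) {n b : ℕ} (hb : Nat.log p n < b) :
    (n !).factorization p = ∑ i ∈ Finset.Ico 1 b, n / p ^ i := by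
  refine le_antisymm ?_ ?_
  · exact (Nat.Prime.pow_dvd_factorial_iff hp hb).mp (Nat.ordProj_dvd _ _)
  · exact (hp.pow_dvd_iff_le_factorization (Nat.factorial_ne_zero n)).mp
      ((Nat.Prime.pow_dvd_factorial_iff hp hb).mpr le_rfl)

lemma fz_mul {a b : ℕ} (p : ℕ) (ha : a ≠ 0) (hb : b ≠ 0) :
    (a*b).factorization p = a.factorization p + b.factorization p := by
  rw [Nat.factorization_mul ha hb]; simp


-- key fact: 2x ≡ r mod q, x < q, r odd < q  ⟹  2x = q + r
lemma resid {q x r : ℕ} (hr : r < q) (hrodd : r % 2 = 1) (hx : x < q)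
    (h : (2*x) % q = r % q) : 2*x = q + r := by
  have h3 : r % q = r := Nat.mod_eq_of_lt hr
  have ht : (2*x)/q < 2 := (Nat.div_lt_iff_lt_mul (by omega)).mpr (by omega)
  have hd : q * ((2*x)/q) + (2*x) % q = 2*x := Nat.div_add_mod _ _
  generalize hgen : (2*x)/q = t at ht hd
  interval_cases t <;> omega

-- valuation inequality for the super Catalan part, with j extra slack
lemma Sval (p j k m : ℕ) (hp : p.Prime) (hodd : p % 2 = 1)
    (hk : p ^ j ∣ k) (hn : 2*(k+m) ≡ 1 [MOD p^j]) :
    ((3*k)!).factorization p + ((3*m)!).factorization p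
      + ((3*(k+m))!).factorization p + j
    ≤ ((6*k)!).factorization p + ((6*m)!).factorization p := by
  have hp2 : 2 ≤ p := hp.two_le
  set b := Nat.log p (6*(k+m)) + j + 2 with hb
  have L : ∀ x : ℕ, x ≤ 6*(k+m) → Nat.log p x < b := fun x hx =>
    lt_of_le_of_lt (Nat.log_mono_right hx) (by omega)
  rw [show 3*(k+m) = 3*k + 3*m by ring]
  rw [legendre hp (L (3*k) (by omega)), legendre hp (L (3*m) (by omega)),
    legendre hp (L (3*k+3*m) (by omega)), legendre hp (L (6*k) (by omega)),
    legendre hp (L (6*m) (by omega))]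
  rw [← Finset.sum_add_distrib, ← Finset.sum_add_distrib, ← Finset.sum_add_distrib]
  have h2m : ∀ i, i ≤ j → 2*m ≡ 1 [MOD p^i] := by
    intro i hij
    have h1 : 2*(k+m) ≡ 1 [MOD p^i] := hn.of_dvd (pow_dvd_pow p hij)
    have h2k : 2*k ≡ 0 [MOD p^i] :=
      (Nat.modEq_zero_iff_dvd).mpr (((pow_dvd_pow p hij).trans hk).mul_left 2)
    have h3 : 2*k + 2*m ≡ 0 + 2*m [MOD p^i] := h2k.add_right (2*m)
    have h4 : 2*m ≡ 2*(k+m) [MOD p^i] := by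
      have e : 2*k + 2*m = 2*(k+m) := by ring
      rw [e, zero_add] at h3
      exact h3.symm
    exact h4.trans h1
  have hqodd : ∀ i : ℕ, p^i % 2 = 1 := by
    intro i; rw [Nat.pow_mod, hodd, one_pow]; rfl
  by_cases h3 : p = 3
  · subst h3
    refine sum_bound (c := 2) (j := j) _ _ (fun i _ => sc0 _ _ _) ?_ ?_
    · intro i hi
      rw [Finset.mem_Ico] at hi
      obtain ⟨hi2, hij⟩ := hi
      have hij' : i - 1 ≤ j := by omega
      have hqe : (3:ℕ)^i = 3 * 3^(i-1) := by
        calc (3:ℕ)^i = 3^(1+(i-1)) := by congr 1; omega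
        _ = 3^1 * 3^(i-1) := pow_add 3 1 (i-1)
        _ = 3 * 3^(i-1) := by norm_num
      have h5 : 5 ≤ (3:ℕ)^i := by
        calc (5:ℕ) ≤ 3^2 := by norm_num
        _ ≤ 3^i := Nat.pow_le_pow_right (by norm_num) hi2
      have hkdvd : (3:ℕ)^i ∣ 3*k := by
        rw [hqe]
        exact Nat.mul_dvd_mul_left 3 ((pow_dvd_pow 3 hij').trans hk)
      apply sc1 _ _ _ h5 hkdvd
      -- 2 * (3*m % 3^i) = 3^i + 3
      have hy : 2 * (m % 3^(i-1)) = 3^(i-1) + 1 := by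
        apply resid (Nat.one_lt_pow (by omega) (by norm_num)) (by norm_num)
          (Nat.mod_lt _ (Nat.pow_pos (by norm_num)))
        have e2 : (2*(m % 3^(i-1))) ≡ 2*m [MOD 3^(i-1)] := (Nat.mod_modEq m _).mul_left 2
        exact e2.trans (h2m (i-1) hij')
      have hmm : 3*m % 3^i = 3 * (m % 3^(i-1)) := by
        rw [hqe, Nat.mul_mod_mul_left]
      rw [hmm, hqe]
      omega
    · intro i hi
      rw [Finset.mem_Ico] at hi ⊢
      have : Nat.log 3 (6*(k+m)) + j + 2 = b := hb.symm
      omega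
  · have hp5 : 5 ≤ p := by
      rcases Nat.lt_or_ge p 5 with h | h
      · interval_cases p <;> simp_all <;> omega
      · exact h
    refine sum_bound (c := 1) (j := j) _ _ (fun i _ => sc0 _ _ _) ?_ ?_
    · intro i hi
      rw [Finset.mem_Ico] at hi
      obtain ⟨hi1, hij⟩ := hi
      have hij' : i ≤ j := by omega
      have h5 : 5 ≤ p^i := le_trans hp5 (Nat.le_self_pow (by omega) p)
      have hkdvd : p^i ∣ 3*k := ((pow_dvd_pow p hij').trans hk).mul_left 3
      apply sc1 _ _ _ h5 hkdvd
      apply resid (by omega) (by norm_num) (Nat.mod_lt _ (by positivity))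
      have e2 : (2*(3*m % p^i)) ≡ 2*(3*m) [MOD p^i] := (Nat.mod_modEq (3*m) _).mul_left 2
      have e1 : 2*(3*m) ≡ 3 [MOD p^i] := by
        have := (h2m i hij').mul_left 3
        have e : 3*(2*m) = 2*(3*m) := by ring
        rw [e, mul_one] at this
        exact this
      exact e2.trans e1
    · intro i hi
      rw [Finset.mem_Ico] at hi ⊢
      have : Nat.log p (6*(k+m)) + j + 2 = b := hb.symm
      omega

lemma perprime (p k m : ℕ) (hp : p.Prime) (hodd : p % 2 = 1) (hn1 : 1 ≤ k + m)
    (hH : p ^ ((2*(k+m)-1).factorization p) ∣ k ∨ ¬ p ∣ m) :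
    (2*(k+m)-1).factorization p + ((3*k)!).factorization p + ((3*m)!).factorization p
      + ((3*(k+m))!).factorization p
    ≤ ((2*(k+m)).choose (2*k)).factorization p + ((6*k)!).factorization p
      + ((6*m)!).factorization p := by
  set e := (2*(k+m)-1).factorization p with he
  have hdvd_e : p^e ∣ 2*(k+m)-1 := Nat.ordProj_dvd _ _
  have hmod : ∀ i : ℕ, p^i ∣ 2*(k+m)-1 → 2*(k+m) ≡ 1 [MOD p^i] := fun i h =>
    ((Nat.modEq_iff_dvd' (by omega)).mpr h).symm
  by_cases hA : p^e ∣ k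
  · have := Sval p e k m hp hodd hA (hmod e hdvd_e)
    omega
  · have hpm : ¬ p ∣ m := hH.resolve_left hA
    have hk0 : k ≠ 0 := fun h => hA (h ▸ dvd_zero _)
    have hm0 : m ≠ 0 := fun h => hpm (h ▸ dvd_zero _)
    set s := k.factorization p with hs
    have hse : s < e := by
      by_contra h
      exact hA ((pow_dvd_pow p (by omega)).trans (Nat.ordProj_dvd k p))
    have hsk : p^s ∣ k := Nat.ordProj_dvd k p
    have hSv := Sval p s k m hp hodd hsk
      (((hmod e hdvd_e)).of_dvd (pow_dvd_pow p (le_of_lt hse)))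
    have hCpos : 0 < (2*(k+m)).choose (2*k) := Nat.choose_pos (by omega)
    have hC0 : (2*(k+m)).choose (2*k) ≠ 0 := hCpos.ne'
    -- the absorption identity
    have hI1 := Nat.add_one_mul_choose_eq (2*(k+m)-1) (2*k-1)
    rw [show 2*(k+m)-1+1 = 2*(k+m) by omega, show 2*k-1+1 = 2*k by omega] at hI1
    have hI2 : (2*(k+m)-1).choose (2*k-1) = (2*(k+m)-1).choose (2*m) := by
      rw [← Nat.choose_symm (show 2*k-1 ≤ 2*(k+m)-1 by omega),
        show 2*(k+m)-1-(2*k-1) = 2*m by omega]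
    have hI3 := Nat.add_one_mul_choose_eq (2*(k+m)-2) (2*m-1)
    rw [show 2*(k+m)-2+1 = 2*(k+m)-1 by omega, show 2*m-1+1 = 2*m by omega] at hI3
    have hkey : 2*k*(2*m*((2*(k+m)).choose (2*k)))
        = 2*(k+m)*((2*(k+m)-1) * ((2*(k+m)-2).choose (2*m-1))) := by
      calc 2*k*(2*m*((2*(k+m)).choose (2*k)))
          = 2*m*((2*(k+m)).choose (2*k) * (2*k)) := by ring
        _ = 2*m*(2*(k+m) * (2*(k+m)-1).choose (2*k-1)) := by rw [← hI1]
        _ = 2*(k+m)*((2*(k+m)-1).choose (2*k-1) * (2*m)) := by ring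
        _ = 2*(k+m)*((2*(k+m)-1).choose (2*m) * (2*m)) := by rw [hI2]
        _ = 2*(k+m)*((2*(k+m)-1) * ((2*(k+m)-2).choose (2*m-1))) := by rw [← hI3]
    have hX0 : 2*k*(2*m*((2*(k+m)).choose (2*k))) ≠ 0 := by positivity
    have hdd : p^e ∣ 2*k*(2*m*((2*(k+m)).choose (2*k))) := by
      rw [hkey]
      exact Dvd.dvd.mul_left (hdvd_e.trans (dvd_mul_right _ _)) _
    have he_le : e ≤ (2*k*(2*m*((2*(k+m)).choose (2*k)))).factorization p :=
      (hp.pow_dvd_iff_le_factorization hX0).mp hdd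
    have e1 : (2*k*(2*m*((2*(k+m)).choose (2*k)))).factorization p
        = (2:ℕ).factorization p + k.factorization p
          + ((2:ℕ).factorization p + m.factorization p
          + ((2*(k+m)).choose (2*k)).factorization p) := by
      rw [fz_mul p (mul_ne_zero two_ne_zero hk0) (mul_ne_zero (mul_ne_zero two_ne_zero hm0) hC0),
        fz_mul p two_ne_zero hk0, fz_mul p (mul_ne_zero two_ne_zero hm0) hC0,
        fz_mul p two_ne_zero hm0]
    have hz2 : (2:ℕ).factorization p = 0 := by
      apply Nat.factorization_eq_zero_of_not_dvd
      intro h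
      have := (Nat.prime_dvd_prime_iff_eq hp Nat.prime_two).mp h
      omega
    have hzm : m.factorization p = 0 := Nat.factorization_eq_zero_of_not_dvd hpm
    omega

lemma Fbase (p k m : ℕ) (hp : p.Prime) :
    ((3*k)!).factorization p + ((3*m)!).factorization p + ((3*(k+m))!).factorization p
    ≤ ((6*k)!).factorization p + ((6*m)!).factorization p := by
  set b := Nat.log p (6*(k+m)) + 2 with hb
  have L : ∀ x : ℕ, x ≤ 6*(k+m) → Nat.log p x < b := fun x hx =>
    lt_of_le_of_lt (Nat.log_mono_right hx) (by omega)
  rw [show 3*(k+m) = 3*k + 3*m by ring]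
  rw [legendre hp (L (3*k) (by omega)), legendre hp (L (3*m) (by omega)),
    legendre hp (L (3*k+3*m) (by omega)), legendre hp (L (6*k) (by omega)),
    legendre hp (L (6*m) (by omega))]
  rw [← Finset.sum_add_distrib, ← Finset.sum_add_distrib, ← Finset.sum_add_distrib]
  exact Finset.sum_le_sum (fun i _ => sc0 _ _ _)

lemma key_dvd (k m : ℕ) (h1 : 1 ≤ k + m) :
    (2*(k+m)-1) * ((3*k)! * ((3*m)! * (3*(k+m))!))
      ∣ (2*(k+m)).choose (2*k) * ((6*k)! * (6*m)!) := by
  have hn1 : (2*(k+m)-1) ≠ 0 := by omega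
  have hL0 : (2*(k+m)-1) * ((3*k)! * ((3*m)! * (3*(k+m))!)) ≠ 0 :=
    mul_ne_zero hn1 (mul_ne_zero (Nat.factorial_ne_zero _)
      (mul_ne_zero (Nat.factorial_ne_zero _) (Nat.factorial_ne_zero _)))
  have hC0 : (2*(k+m)).choose (2*k) ≠ 0 := (Nat.choose_pos (by omega)).ne'
  have hR0 : (2*(k+m)).choose (2*k) * ((6*k)! * (6*m)!) ≠ 0 :=
    mul_ne_zero hC0 (mul_ne_zero (Nat.factorial_ne_zero _) (Nat.factorial_ne_zero _))
  rw [← Nat.factorization_prime_le_iff_dvd hL0 hR0]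
  intro p hp
  rw [fz_mul p hn1 (mul_ne_zero (Nat.factorial_ne_zero _)
      (mul_ne_zero (Nat.factorial_ne_zero _) (Nat.factorial_ne_zero _))),
    fz_mul p (Nat.factorial_ne_zero _) (mul_ne_zero (Nat.factorial_ne_zero _) (Nat.factorial_ne_zero _)),
    fz_mul p (Nat.factorial_ne_zero _) (Nat.factorial_ne_zero _),
    fz_mul p hC0 (mul_ne_zero (Nat.factorial_ne_zero _) (Nat.factorial_ne_zero _)),
    fz_mul p (Nat.factorial_ne_zero _) (Nat.factorial_ne_zero _)]
  by_cases hp2 : p = 2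
  · subst hp2
    have he0 : (2*(k+m)-1).factorization 2 = 0 :=
      Nat.factorization_eq_zero_of_not_dvd (by omega)
    have := Fbase 2 k m hp
    omega
  · have hodd : p % 2 = 1 := hp.eq_two_or_odd.resolve_left hp2
    have hsym : (2*(k+m)).choose (2*m) = (2*(k+m)).choose (2*k) := by
      rw [← Nat.choose_symm (show 2*k ≤ 2*(k+m) by omega),
        show 2*(k+m)-2*k = 2*m by omega]
    have hmk : m + k = k + m := by ring
    set e := (2*(k+m)-1).factorization p with he
    by_cases hA : p^e ∣ k
    · have := perprime p k m hp hodd h1 (Or.inl hA)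
      omega
    · by_cases hB : p^e ∣ m
      · have H := perprime p m k hp hodd (by omega) (Or.inl (by rwa [hmk]))
        rw [hmk, hsym] at H
        omega
      · have he1 : 1 ≤ e := by
          by_contra h
          exact hA (by simpa [show e = 0 by omega, pow_zero] using one_dvd k)
        have hdvd_e : p ∣ 2*(k+m)-1 :=
          (dvd_pow_self p (by omega : e ≠ 0)).trans (Nat.ordProj_dvd _ _)
        have hnot : ¬ p ∣ k ∨ ¬ p ∣ m := by
          by_contra h
          push_neg at h
          have hx : p ∣ 2*(k+m) := Dvd.dvd.mul_left (h.1.add h.2) 2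
          have hone : p ∣ 1 := by
            have := Nat.dvd_sub hx hdvd_e
            rwa [show 2*(k+m) - (2*(k+m)-1) = 1 by omega] at this
          have := Nat.le_of_dvd one_pos hone
          have := hp.two_le
          omega
        rcases hnot with h | h
        · have H := perprime p m k hp hodd (by omega) (Or.inr h)
          rw [hmk, hsym] at H
          omega
        · have := perprime p k m hp hodd h1 (Or.inr h)
          omega


theorem quotient_is_integer (n k : ℕ) (hn : 1 ≤ n) (hk : k ≤ n) :
    ∃ z : ℤ,
      ((Nat.factorial (6 * k) : ℚ) * (Nat.factorial (6 * n - 6 * k) : ℚ) *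
          (Nat.factorial (2 * n) : ℚ) * (Nat.factorial (2 * n - 2) : ℚ)) /
        ((Nat.factorial (3 * k) : ℚ) * (Nat.factorial (3 * n - 3 * k) : ℚ) *
          (Nat.factorial (3 * n) : ℚ) * (Nat.factorial (2 * k) : ℚ) *
          (Nat.factorial (2 * n - 2 * k) : ℚ) * (Nat.factorial (2 * n - 1) : ℚ)) = z := by
  obtain ⟨m, rfl⟩ : ∃ m, n = k + m := ⟨n - k, by omega⟩
  rw [show 6*(k+m) - 6*k = 6*m by omega, show 3*(k+m) - 3*k = 3*m by omega,
    show 2*(k+m) - 2*k = 2*m by omega]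
  obtain ⟨W, hW⟩ := key_dvd k m (by omega)
  refine ⟨(W : ℤ), ?_⟩
  have hCf := Nat.choose_mul_factorial_mul_factorial (show 2*k ≤ 2*(k+m) by omega)
  rw [show 2*(k+m)-2*k = 2*m by omega] at hCf
  have h21 : 2*(k+m)-1 = (2*(k+m)-2)+1 := by omega
  have hf1 : (2*(k+m)-1)! = (2*(k+m)-1) * (2*(k+m)-2)! := by
    rw [h21, Nat.factorial_succ]
  rw [div_eq_iff (by positivity)]
  have hWq : (((2*(k+m)).choose (2*k) : ℚ) * ((6*k)! * (6*m)!)) =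
      ((2*(k+m)-1 : ℕ) : ℚ) * ((3*k)! * ((3*m)! * (3*(k+m))!)) * (W : ℚ) := by
    exact_mod_cast congrArg (Nat.cast : ℕ → ℚ) hW
  have hCq : (((2*(k+m)).choose (2*k) : ℚ)) * ((2*k)! : ℚ) * ((2*m)! : ℚ)
      = ((2*(k+m))! : ℚ) := by
    exact_mod_cast congrArg (Nat.cast : ℕ → ℚ) hCf
  have hfq : ((2*(k+m)-1)! : ℚ) = ((2*(k+m)-1 : ℕ) : ℚ) * ((2*(k+m)-2)! : ℚ) := by
    exact_mod_cast congrArg (Nat.cast : ℕ → ℚ) hf1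
  push_cast
  linear_combination (((2*k)! : ℚ) * ((2*m)! : ℚ) * ((2*(k+m)-2)! : ℚ)) * hWq
    - (((6*k)! : ℚ) * ((6*m)! : ℚ) * ((2*(k+m)-2)! : ℚ)) * hCq
    - ((W : ℚ) * ((3*k)! : ℚ) * ((3*m)! : ℚ) * ((3*(k+m))! : ℚ) * ((2*k)! : ℚ) * ((2*m)! : ℚ)) * hfq
end

section
/- For all integers n ≥ 0 and 0 ≤ k ≤ n, as rational numbers, C(6k,3k)·C(3k,k)·C(6(n-k),3(n-k))·C(3(n-k),n-k) / ((2n-1)·C(3n,n)) = (1/(2n-1)) · [(6k)!·(6n-6k)! / ((3k)!·(3n-3k)!·(3n)!)] · C(2n,2k) · C(n,k), and for n ≥ 1 this rational number is an integer divisible by C(n,k). -/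
open Nat Finset

lemma two_mul_div (x q : ℕ) (hq : 0 < q) :
    2 * x / q = 2 * (x / q) + 2 * (x % q) / q := by
  have h : 2 * x = 2 * (x % q) + 2 * (x / q) * q := by
    conv_lhs => rw [← Nat.div_add_mod x q]
    ring
  rw [h, Nat.add_mul_div_right _ _ hq, Nat.add_comm]

lemma add_div_split (x y q : ℕ) (hq : 0 < q) :
    (x + y) / q = x / q + y / q + (x % q + y % q) / q := by
  have h : x + y = (x % q + y % q) + (x / q + y / q) * q := by
    conv_lhs => rw [← Nat.div_add_mod x q, ← Nat.div_add_mod y q]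
    ring
  rw [h, Nat.add_mul_div_right _ _ hq]
  omega

lemma A_nonneg (a b q : ℕ) (hq : 0 < q) :
    a / q + b / q + (a + b) / q ≤ 2 * a / q + 2 * b / q := by
  rw [two_mul_div a q hq, two_mul_div b q hq, add_div_split a b q hq]
  have ha := Nat.mod_lt a hq
  have hb := Nat.mod_lt b hq
  have h01 := Nat.zero_le (2 * (a % q) / q)
  have h02 := Nat.zero_le (2 * (b % q) / q)
  rcases Nat.lt_or_ge (a % q + b % q) q with h | h
  · rw [Nat.div_eq_of_lt h]; omega
  · have h2 : (a % q + b % q) / q ≤ 1 := by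
      apply Nat.lt_succ_iff.mp
      rw [Nat.div_lt_iff_lt_mul hq]; omega
    have h3 : q ≤ 2 * (a % q) ∨ q ≤ 2 * (b % q) := by omega
    rcases h3 with h3 | h3
    · have : 1 ≤ 2 * (a % q) / q := (Nat.one_le_div_iff hq).mpr h3
      omega
    · have : 1 ≤ 2 * (b % q) / q := (Nat.one_le_div_iff hq).mpr h3
      omega

lemma B_nonneg (a b q : ℕ) (hq : 0 < q) : a / q + b / q ≤ (a + b) / q := by
  rw [add_div_split a b q hq]
  have h0 := Nat.zero_le ((a % q + b % q) / q)
  omega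

lemma B_gain (a b q : ℕ) (hq : 0 < q) (h : q ≤ a % q + b % q) :
    a / q + b / q + 1 ≤ (a + b) / q := by
  rw [add_div_split a b q hq]
  have : 1 ≤ (a % q + b % q) / q := (Nat.one_le_div_iff hq).mpr h
  omega

lemma A_gain (a b q : ℕ) (hq5 : 5 ≤ q) (hqodd : q % 2 = 1)
    (ha : a % q = 0) (hb : b % q = (q + 3) / 2) :
    a / q + b / q + (a + b) / q + 1 ≤ 2 * a / q + 2 * b / q := by
  have hq : 0 < q := by omega
  rw [two_mul_div a q hq, two_mul_div b q hq, add_div_split a b q hq]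
  have h1 : 2 * (a % q) / q = 0 := by simp [ha]
  have hb2 : 2 * (b % q) = q + 3 := by omega
  have h2 : 2 * (b % q) / q = 1 := by
    rw [hb2]
    exact Nat.div_eq_of_lt_le (by omega) (by omega)
  have h3 : (a % q + b % q) / q = 0 := Nat.div_eq_of_lt (by omega)
  omega

lemma mod_half (m q : ℕ) (hq : 3 ≤ q) (hodd : q % 2 = 1) (h : 2 * m % q = 1) :
    m % q = (q + 1) / 2 := by
  have hq0 : 0 < q := by omega
  have h' : 2 * (m % q) % q = 1 := by
    rw [Nat.mul_mod, Nat.mod_eq_of_lt (show 2 < q by omega)] at h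
    rwa [Nat.mul_mod, Nat.mod_eq_of_lt (show 2 < q by omega), Nat.mod_mod_of_dvd]
    exact dvd_refl q
  have hlt : m % q < q := Nat.mod_lt _ hq0
  have hd := Nat.div_add_mod (2 * (m % q)) q
  rw [h'] at hd
  have he : 2 * (m % q) / q ≤ 1 := by
    apply Nat.lt_succ_iff.mp
    rw [Nat.div_lt_iff_lt_mul hq0]; omega
  rcases Nat.le_one_iff_eq_zero_or_eq_one.mp he with h0 | h0 <;> rw [h0] at hd <;> omega

lemma mod_zero_of_two (k q : ℕ) (hq : 3 ≤ q) (hodd : q % 2 = 1) (h : 2 * k % q = 0) :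
    k % q = 0 := by
  have hq0 : 0 < q := by omega
  have h' : 2 * (k % q) % q = 0 := by
    rw [Nat.mul_mod, Nat.mod_eq_of_lt (show 2 < q by omega)] at h
    rwa [Nat.mul_mod, Nat.mod_eq_of_lt (show 2 < q by omega), Nat.mod_mod_of_dvd]
    exact dvd_refl q
  have hlt : k % q < q := Nat.mod_lt _ hq0
  have hd := Nat.div_add_mod (2 * (k % q)) q
  rw [h'] at hd
  have he : 2 * (k % q) / q ≤ 1 := by
    apply Nat.lt_succ_iff.mp
    rw [Nat.div_lt_iff_lt_mul hq0]; omega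
  rcases Nat.le_one_iff_eq_zero_or_eq_one.mp he with h0 | h0 <;> rw [h0] at hd <;> omega

lemma side_gain (p i k m : ℕ) (hp : p.Prime) (hp2 : p ≠ 2) (hi : 1 ≤ i)
    (hk : k % p ^ i = 0) (hm : m % p ^ i = (p ^ i + 1) / 2) :
    3*k / p^(if p = 3 then i+1 else i) + 3*m / p^(if p = 3 then i+1 else i)
      + 3*(k+m) / p^(if p = 3 then i+1 else i) + 1
      ≤ 6*k / p^(if p = 3 then i+1 else i) + 6*m / p^(if p = 3 then i+1 else i) := by
  have hpodd : p % 2 = 1 := Nat.odd_iff.mp (hp.odd_of_ne_two hp2)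
  have hqodd : ∀ j, p ^ j % 2 = 1 := by
    intro j; rw [Nat.pow_mod, hpodd, one_pow]; rfl
  have hpq : p ≤ p ^ i := Nat.le_self_pow (by omega) p
  have hkd : p ^ i ∣ k := Nat.dvd_of_mod_eq_zero hk
  have e1 : 3*k + 3*m = 3*(k+m) := by ring
  have e2 : 2*(3*k) = 6*k := by ring
  have e3 : 2*(3*m) = 6*m := by ring
  by_cases h3 : p = 3
  · simp only [if_pos h3]
    subst h3
    have hq3 : 3 ≤ 3 ^ i := by calc 3 = 3^1 := rfl
                                   _ ≤ 3^i := Nat.pow_le_pow_right (by norm_num) hi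
    have hq' : (3:ℕ) ^ (i+1) = 3 * 3 ^ i := by rw [pow_succ]; ring
    rw [hq']
    have ha : 3*k % (3 * 3^i) = 0 := by
      obtain ⟨t, ht⟩ := hkd
      subst ht
      rw [show 3*(3^i*t) = (3*3^i)*t by ring]
      exact Nat.mul_mod_right _ _
    have hb : 3*m % (3 * 3^i) = (3 * 3^i + 3) / 2 := by
      rw [Nat.mul_mod_mul_left, hm]
      have := hqodd i
      omega
    have := A_gain (3*k) (3*m) (3*3^i) (by omega) (by have := hqodd (i+1); rw [hq'] at this; exact this) ha hb
    rw [e1, e2, e3] at this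
    exact this
  · simp only [if_neg h3]
    have hp5 : 5 ≤ p := by
      have h2 := hp.two_le
      have h4 : p ≠ 4 := by rintro rfl; norm_num at hp
      omega
    have hq5 : 5 ≤ p ^ i := le_trans hp5 hpq
    have ha : 3*k % p^i = 0 := by
      obtain ⟨t, ht⟩ := hkd
      subst ht
      rw [show 3*(p^i*t) = p^i*(3*t) by ring]
      exact Nat.mul_mod_right _ _
    have hb : 3*m % p^i = (p^i + 3) / 2 := by
      have hqo := hqodd i
      rw [Nat.mul_mod, Nat.mod_eq_of_lt (show 3 < p^i by omega), hm]
      have h32 : 3 * ((p^i+1)/2) = p^i + (p^i+3)/2 := by omega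
      rw [h32, Nat.add_mod_left, Nat.mod_eq_of_lt (by omega)]
    have := A_gain (3*k) (3*m) (p^i) hq5 (hqodd i) ha hb
    rw [e1, e2, e3] at this
    exact this

lemma index_good (p i k m : ℕ) (hp : p.Prime) (hp2 : p ≠ 2) (hi : 1 ≤ i)
    (hdvd : p ^ i ∣ 2 * (k + m) - 1) (hn : 1 ≤ k + m)
    (hnc : ¬ p ^ i ≤ 2*k % p^i + 2*m % p^i) :
    3*k / p^(if p = 3 then i+1 else i) + 3*m / p^(if p = 3 then i+1 else i)
      + 3*(k+m) / p^(if p = 3 then i+1 else i) + 1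
      ≤ 6*k / p^(if p = 3 then i+1 else i) + 6*m / p^(if p = 3 then i+1 else i) := by
  have hp3 : 3 ≤ p := by
    have := hp.two_le; omega
  have hq3 : 3 ≤ p ^ i := le_trans hp3 (Nat.le_self_pow (by omega) p)
  have hpodd : p % 2 = 1 := Nat.odd_iff.mp (hp.odd_of_ne_two hp2)
  have hqodd : p ^ i % 2 = 1 := by rw [Nat.pow_mod, hpodd, one_pow]; rfl
  obtain ⟨t, ht⟩ := hdvd
  have heq : 2 * (k + m) = p ^ i * t + 1 := by
    have h1 : 1 ≤ 2 * (k + m) := by omega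
    omega
  have hmod : 2 * (k + m) % p ^ i = 1 := by
    rw [heq, Nat.mul_add_mod, Nat.mod_eq_of_lt (by omega)]
  have hsum : (2*k % p^i + 2*m % p^i) % p^i = 1 := by
    rw [← Nat.add_mod, show 2*k + 2*m = 2*(k+m) by ring, hmod]
  have hk' : 2*k % p^i < p^i := Nat.mod_lt _ (by omega)
  have hm' : 2*m % p^i < p^i := Nat.mod_lt _ (by omega)
  have hsum' : 2*k % p^i + 2*m % p^i = 1 := by
    rw [Nat.mod_eq_of_lt (by omega)] at hsum
    exact hsum
  have h01 := Nat.zero_le (2*k % p^i)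
  have h02 := Nat.zero_le (2*m % p^i)
  rcases (show (2*k % p^i = 0 ∧ 2*m % p^i = 1) ∨ (2*m % p^i = 0 ∧ 2*k % p^i = 1) by omega)
    with ⟨h1, h2⟩ | ⟨h1, h2⟩
  · exact side_gain p i k m hp hp2 hi (mod_zero_of_two k _ hq3 hqodd h1)
      (mod_half m _ hq3 hqodd h2)
  · have := side_gain p i m k hp hp2 hi (mod_zero_of_two m _ hq3 hqodd h1)
      (mod_half k _ hq3 hqodd h2)
    rw [show m + k = k + m by ring] at this
    omega

lemma sum_ineq (p : ℕ) (hp : p.Prime) (k m : ℕ) (hn : 1 ≤ k + m) (b : ℕ)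
    (hb : (2 * (k + m) - 1).factorization p + 1 < b) :
    (2*(k+m)-1).factorization p
      + ((∑ i ∈ Ico 1 b, 3*k / p^i) + (∑ i ∈ Ico 1 b, 3*m / p^i)
      + (∑ i ∈ Ico 1 b, 3*(k+m) / p^i) + (∑ i ∈ Ico 1 b, 2*k / p^i)
      + (∑ i ∈ Ico 1 b, 2*m / p^i))
      ≤ (∑ i ∈ Ico 1 b, 6*k / p^i) + (∑ i ∈ Ico 1 b, 6*m / p^i)
        + (∑ i ∈ Ico 1 b, 2*(k+m) / p^i) := by
  have hp1 : 1 < p := hp.one_lt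
  have hq : ∀ i : ℕ, 0 < p ^ i := fun i => Nat.pow_pos (n := i) (by omega)
  set a := (2*(k+m)-1).factorization p with ha
  by_cases hp2 : p = 2
  · -- a = 0, use plain nonneg inequalities
    have ha0 : a = 0 := by
      rw [ha, hp2]
      apply Nat.factorization_eq_zero_of_not_dvd
      omega
    rw [ha0]
    have hA : (∑ i ∈ Ico 1 b, 3*k / p^i) + (∑ i ∈ Ico 1 b, 3*m / p^i)
        + (∑ i ∈ Ico 1 b, 3*(k+m) / p^i)
        ≤ (∑ i ∈ Ico 1 b, 6*k / p^i) + (∑ i ∈ Ico 1 b, 6*m / p^i) := by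
      rw [← Finset.sum_add_distrib, ← Finset.sum_add_distrib, ← Finset.sum_add_distrib]
      apply Finset.sum_le_sum
      intro i _
      have := A_nonneg (3*k) (3*m) (p^i) (hq i)
      rw [show 3*k + 3*m = 3*(k+m) by ring, show 2*(3*k) = 6*k by ring,
        show 2*(3*m) = 6*m by ring] at this
      exact this
    have hB : (∑ i ∈ Ico 1 b, 2*k / p^i) + (∑ i ∈ Ico 1 b, 2*m / p^i)
        ≤ ∑ i ∈ Ico 1 b, 2*(k+m) / p^i := by
      rw [← Finset.sum_add_distrib]
      apply Finset.sum_le_sum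
      intro i _
      have := B_nonneg (2*k) (2*m) (p^i) (hq i)
      rw [show 2*k + 2*m = 2*(k+m) by ring] at this
      exact this
    omega
  · -- p odd
    set s : Finset ℕ := Ico 1 (a+1) with hs
    set C : Finset ℕ := s.filter (fun i => p^i ≤ 2*k % p^i + 2*m % p^i) with hC
    set NC : Finset ℕ := s \ C with hNC
    have hCs : C ⊆ s := Finset.filter_subset _ _
    have hsb : s ⊆ Ico 1 b := by
      apply Finset.Ico_subset_Ico (le_refl 1) (by omega)
    have hdvd : ∀ i ∈ s, p ^ i ∣ 2*(k+m) - 1 := by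
      intro i hi
      have hia : i ≤ a := by
        rw [hs] at hi; simp [Finset.mem_Ico] at hi; omega
      exact dvd_trans (pow_dvd_pow p hia) (Nat.ordProj_dvd _ _)
    -- Claim B
    have claimB : (∑ i ∈ Ico 1 b, 2*k / p^i) + (∑ i ∈ Ico 1 b, 2*m / p^i) + C.card
        ≤ ∑ i ∈ Ico 1 b, 2*(k+m) / p^i := by
      have key : ∑ i ∈ Ico 1 b, (2*k / p^i + 2*m / p^i + if i ∈ C then 1 else 0)
          ≤ ∑ i ∈ Ico 1 b, 2*(k+m) / p^i := by
        apply Finset.sum_le_sum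
        intro i _
        by_cases hiC : i ∈ C
        · rw [if_pos hiC]
          have hcarry : p^i ≤ 2*k % p^i + 2*m % p^i := by
            rw [hC] at hiC
            exact (Finset.mem_filter.mp hiC).2
          have := B_gain (2*k) (2*m) (p^i) (hq i) hcarry
          rw [show 2*k + 2*m = 2*(k+m) by ring] at this
          exact this
        · rw [if_neg hiC]
          have := B_nonneg (2*k) (2*m) (p^i) (hq i)
          rw [show 2*k + 2*m = 2*(k+m) by ring] at this
          omega
      rw [Finset.sum_add_distrib, Finset.sum_add_distrib] at key
      have hite : (∑ i ∈ Ico 1 b, if i ∈ C then 1 else 0) = C.card := by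
        rw [Finset.sum_ite_mem, Finset.inter_eq_right.mpr (hCs.trans hsb),
          Finset.sum_const, smul_eq_mul, mul_one]
      rw [hite] at key
      omega
    -- Claim A
    have claimA : (∑ i ∈ Ico 1 b, 3*k / p^i) + (∑ i ∈ Ico 1 b, 3*m / p^i)
        + (∑ i ∈ Ico 1 b, 3*(k+m) / p^i) + NC.card
        ≤ (∑ i ∈ Ico 1 b, 6*k / p^i) + (∑ i ∈ Ico 1 b, 6*m / p^i) := by
      set σ : ℕ → ℕ := fun i => if p = 3 then i+1 else i with hσ
      set D : Finset ℕ := NC.image σ with hD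
      have hσinj : Function.Injective σ := by
        intro x y hxy
        rw [hσ] at hxy
        by_cases h3 : p = 3 <;> simp [h3] at hxy <;> omega
      have hDcard : D.card = NC.card := Finset.card_image_of_injective _ hσinj
      have hDsub : D ⊆ Ico 1 b := by
        intro j hj
        rw [hD] at hj
        obtain ⟨i, hiNC, hij⟩ := Finset.mem_image.mp hj
        have his : i ∈ s := (Finset.mem_sdiff.mp hiNC).1
        rw [hs] at his
        simp [Finset.mem_Ico] at his
        rw [Finset.mem_Ico]
        rw [hσ] at hij
        by_cases h3 : p = 3 <;> simp [h3] at hij <;> omega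
      have hgain : ∀ j ∈ D, 3*k / p^j + 3*m / p^j + 3*(k+m) / p^j + 1
          ≤ 6*k / p^j + 6*m / p^j := by
        intro j hj
        rw [hD] at hj
        obtain ⟨i, hiNC, hij⟩ := Finset.mem_image.mp hj
        obtain ⟨his, hiC⟩ := Finset.mem_sdiff.mp hiNC
        have hi1 : 1 ≤ i := by
          rw [hs] at his; simp [Finset.mem_Ico] at his; omega
        have hnc : ¬ p ^ i ≤ 2*k % p^i + 2*m % p^i := by
          intro hcon
          exact hiC (by rw [hC]; exact Finset.mem_filter.mpr ⟨his, hcon⟩)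
        have := index_good p i k m hp hp2 hi1 (hdvd i his) hn hnc
        have hij' : (if p = 3 then i + 1 else i) = j := hij
        rw [hij'] at this
        exact this
      have key : ∑ i ∈ Ico 1 b, (3*k / p^i + 3*m / p^i + 3*(k+m) / p^i + if i ∈ D then 1 else 0)
          ≤ ∑ i ∈ Ico 1 b, (6*k / p^i + 6*m / p^i) := by
        apply Finset.sum_le_sum
        intro i _
        by_cases hiD : i ∈ D
        · rw [if_pos hiD]
          exact hgain i hiD
        · rw [if_neg hiD]
          have := A_nonneg (3*k) (3*m) (p^i) (hq i)
          rw [show 3*k + 3*m = 3*(k+m) by ring, show 2*(3*k) = 6*k by ring,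
            show 2*(3*m) = 6*m by ring] at this
          omega
      rw [Finset.sum_add_distrib, Finset.sum_add_distrib, Finset.sum_add_distrib,
        Finset.sum_add_distrib] at key
      have hite : (∑ i ∈ Ico 1 b, if i ∈ D then 1 else 0) = D.card := by
        rw [Finset.sum_ite_mem, Finset.inter_eq_right.mpr hDsub,
          Finset.sum_const, smul_eq_mul, mul_one]
      rw [hite] at key
      omega
    have hcard : C.card + NC.card = a := by
      rw [hNC, Finset.card_sdiff_of_subset hCs]
      have : s.card = a := by rw [hs, Nat.card_Ico]; omega
      have := Finset.card_le_card hCs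
      omega
    omega

lemma main_dvd (k m : ℕ) (hn : 1 ≤ k + m) :
    (2*(k+m)-1) * ((3*k)! * ((3*m)! * ((3*(k+m))! * ((2*k)! * (2*m)!)))) ∣
      (6*k)! * ((6*m)! * (2*(k+m))!) := by
  have f0 : ∀ x : ℕ, (x)! ≠ 0 := fun x => Nat.factorial_ne_zero x
  have h10 : 2*(k+m)-1 ≠ 0 := by omega
  have hd0 : (2*(k+m)-1) * ((3*k)! * ((3*m)! * ((3*(k+m))! * ((2*k)! * (2*m)!)))) ≠ 0 := by
    exact mul_ne_zero h10 (mul_ne_zero (f0 _) (mul_ne_zero (f0 _)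
      (mul_ne_zero (f0 _) (mul_ne_zero (f0 _) (f0 _)))))
  have hN0 : (6*k)! * ((6*m)! * (2*(k+m))!) ≠ 0 :=
    mul_ne_zero (f0 _) (mul_ne_zero (f0 _) (f0 _))
  rw [← Nat.factorization_le_iff_dvd hd0 hN0]
  rw [Nat.factorization_mul h10 (mul_ne_zero (f0 _) (mul_ne_zero (f0 _)
      (mul_ne_zero (f0 _) (mul_ne_zero (f0 _) (f0 _))))),
    Nat.factorization_mul (f0 _) (mul_ne_zero (f0 _)
      (mul_ne_zero (f0 _) (mul_ne_zero (f0 _) (f0 _)))),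
    Nat.factorization_mul (f0 _) (mul_ne_zero (f0 _) (mul_ne_zero (f0 _) (f0 _))),
    Nat.factorization_mul (f0 _) (mul_ne_zero (f0 _) (f0 _)),
    Nat.factorization_mul (f0 _) (f0 _),
    Nat.factorization_mul (f0 _) (mul_ne_zero (f0 _) (f0 _)),
    Nat.factorization_mul (f0 _) (f0 _)]
  intro p
  simp only [Finsupp.coe_add, Pi.add_apply]
  by_cases hp : p.Prime
  · haveI := Fact.mk hp
    set a := (2*(k+m)-1).factorization p with ha
    set b := a + 6*(k+m) + 2 with hb
    have hlog : ∀ x : ℕ, x ≤ 6*(k+m) → Nat.log p x < b := by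
      intro x hx
      have := Nat.log_le_self p x
      omega
    rw [Nat.factorization_def _ hp, Nat.factorization_def _ hp, Nat.factorization_def _ hp,
      Nat.factorization_def _ hp, Nat.factorization_def _ hp, Nat.factorization_def _ hp,
      Nat.factorization_def _ hp, Nat.factorization_def _ hp]
    rw [padicValNat_factorial (hlog _ (by omega)), padicValNat_factorial (hlog _ (by omega)),
      padicValNat_factorial (hlog _ (by omega)), padicValNat_factorial (hlog _ (by omega)),
      padicValNat_factorial (hlog _ (by omega)), padicValNat_factorial (hlog _ (by omega)),
      padicValNat_factorial (hlog _ (by omega)), padicValNat_factorial (hlog _ (by omega))]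
    have := sum_ineq p hp k m hn b (by omega)
    omega
  · simp [Nat.factorization_eq_zero_of_not_prime _ hp]

theorem summand_quotient_identity (n k : ℕ) (hk : k ≤ n) :
    ((Nat.choose (6 * k) (3 * k) : ℚ) * (Nat.choose (3 * k) k : ℚ) *
          (Nat.choose (6 * (n - k)) (3 * (n - k)) : ℚ) *
          (Nat.choose (3 * (n - k)) (n - k) : ℚ)) /
        ((2 * (n : ℚ) - 1) * (Nat.choose (3 * n) n : ℚ)) =
      (1 / (2 * (n : ℚ) - 1)) *
        ((Nat.factorial (6 * k) : ℚ) * (Nat.factorial (6 * n - 6 * k) : ℚ) /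
          ((Nat.factorial (3 * k) : ℚ) * (Nat.factorial (3 * n - 3 * k) : ℚ) *
            (Nat.factorial (3 * n) : ℚ))) *
        (Nat.choose (2 * n) (2 * k) : ℚ) * (Nat.choose n k : ℚ) ∧
    (1 ≤ n →
      ∃ z : ℤ,
        ((Nat.choose (6 * k) (3 * k) : ℚ) * (Nat.choose (3 * k) k : ℚ) *
            (Nat.choose (6 * (n - k)) (3 * (n - k)) : ℚ) *
            (Nat.choose (3 * (n - k)) (n - k) : ℚ)) /
          ((2 * (n : ℚ) - 1) * (Nat.choose (3 * n) n : ℚ)) =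
        (z : ℚ) * (Nat.choose n k : ℚ)) := by
  have F : ∀ x : ℕ, ((x)! : ℚ) ≠ 0 := fun x => Nat.cast_ne_zero.mpr (Nat.factorial_ne_zero x)
  have hden : (2 * (n : ℚ) - 1) ≠ 0 := by
    intro h
    have h1 : ((2 * n : ℕ) : ℚ) = 1 := by push_cast; linarith
    have h2 : 2 * n = 1 := by exact_mod_cast h1
    omega
  set m := n - k with hm
  have hkm : k + m = n := by omega
  have e6 : 6 * n - 6 * k = 6 * m := by omega
  have e3 : 3 * n - 3 * k = 3 * m := by omega
  have c1 : (((6*k).choose (3*k)) : ℚ) = (6*k)! / ((3*k)! * (3*k)!) := by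
    rw [Nat.cast_choose ℚ (by omega : 3*k ≤ 6*k), show 6*k - 3*k = 3*k from by omega]
  have c2 : (((3*k).choose k) : ℚ) = (3*k)! / ((k)! * (2*k)!) := by
    rw [Nat.cast_choose ℚ (by omega : k ≤ 3*k), show 3*k - k = 2*k from by omega]
  have c3 : (((6*m).choose (3*m)) : ℚ) = (6*m)! / ((3*m)! * (3*m)!) := by
    rw [Nat.cast_choose ℚ (by omega : 3*m ≤ 6*m), show 6*m - 3*m = 3*m from by omega]
  have c4 : (((3*m).choose m) : ℚ) = (3*m)! / ((m)! * (2*m)!) := by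
    rw [Nat.cast_choose ℚ (by omega : m ≤ 3*m), show 3*m - m = 2*m from by omega]
  have c5 : (((3*n).choose n) : ℚ) = (3*n)! / ((n)! * (2*n)!) := by
    rw [Nat.cast_choose ℚ (by omega : n ≤ 3*n), show 3*n - n = 2*n from by omega]
  have c6 : (((2*n).choose (2*k)) : ℚ) = (2*n)! / ((2*k)! * (2*m)!) := by
    rw [Nat.cast_choose ℚ (by omega : 2*k ≤ 2*n), show 2*n - 2*k = 2*m from by omega]
  have c7 : ((n.choose k) : ℚ) = (n)! / ((k)! * (m)!) := by
    rw [Nat.cast_choose ℚ hk]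
  have key : ((Nat.choose (6 * k) (3 * k) : ℚ) * (Nat.choose (3 * k) k : ℚ) *
          (Nat.choose (6 * m) (3 * m) : ℚ) *
          (Nat.choose (3 * m) m : ℚ)) /
        ((2 * (n : ℚ) - 1) * (Nat.choose (3 * n) n : ℚ)) =
      (1 / (2 * (n : ℚ) - 1)) *
        ((Nat.factorial (6 * k) : ℚ) * (Nat.factorial (6 * m) : ℚ) /
          ((Nat.factorial (3 * k) : ℚ) * (Nat.factorial (3 * m) : ℚ) *
            (Nat.factorial (3 * n) : ℚ))) *
        (Nat.choose (2 * n) (2 * k) : ℚ) * (Nat.choose n k : ℚ) := by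
    rw [c1, c2, c3, c4, c5, c6, c7]
    field_simp
  refine ⟨by rw [e6, e3]; exact key, ?_⟩
  intro hn1
  have hd := main_dvd k m (by omega)
  rw [hkm] at hd
  set d : ℕ := (2*n-1) * ((3*k)! * ((3*m)! * ((3*n)! * ((2*k)! * (2*m)!)))) with hdd
  set N : ℕ := (6*k)! * ((6*m)! * (2*n)!) with hNN
  have hd0 : d ≠ 0 := by
    rw [hdd]
    refine mul_ne_zero (by omega) ?_
    exact mul_ne_zero (Nat.factorial_ne_zero _) (mul_ne_zero (Nat.factorial_ne_zero _)
      (mul_ne_zero (Nat.factorial_ne_zero _)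
        (mul_ne_zero (Nat.factorial_ne_zero _) (Nat.factorial_ne_zero _))))
  refine ⟨((N / d : ℕ) : ℤ), ?_⟩
  rw [key]
  have hzz : (((((N / d : ℕ) : ℤ)) : ℚ)) = ((N / d : ℕ) : ℚ) := Int.cast_natCast _
  rw [hzz]
  have hz : ((N / d : ℕ) : ℚ) = (N : ℚ) / (d : ℚ) :=
    Nat.cast_div hd (Nat.cast_ne_zero.mpr hd0)
  have hNcast : (N : ℚ) = ((6*k)! : ℚ) * (((6*m)! : ℚ) * ((2*n)! : ℚ)) := by
    rw [hNN]; push_cast; ring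
  have hdcast : (d : ℚ) = (2*(n:ℚ)-1) * (((3*k)! : ℚ) * (((3*m)! : ℚ) * (((3*n)! : ℚ) *
      (((2*k)! : ℚ) * ((2*m)! : ℚ))))) := by
    rw [hdd]
    push_cast [Nat.cast_sub (show 1 ≤ 2*n by omega)]
    ring
  rw [hz, hNcast, hdcast, c6, c7]
  field_simp
end
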